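/- arXiv:math/0601490 — 2 statements merged into one kernel-verified Lean document; each statement's English description precedes it below -/
import Mathlib

section
/- Development Lemma: for every arrow term f of M≤ there is a developed arrow term f' of the same type such that f = f' in M≤. -/
/-! Formalization of categories of proofs for linear equality (Dosen-Petric),
with the generality functor G into the category Br of Brauerian diagrams,
represented here by the matching relation on occurrences of variables. -/

namespace DP

/-- Formulae: atomic formulae `x R y` (for the binary predicate in question),
the constant true, and conjunctions. -/
inductive Fm (V : Type) : Type
  | rel : V → V → Fm V
  | top : Fm V
  | and : Fm V → Fm V → Fm V

/-- Occurrences of variables in a formula: `false`/`true` are respectively the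
left-hand and right-hand occurrences of variables in an atomic formula. -/
def Occ {V : Type} : Fm V → Type
  | .rel _ _ => Bool
  | .top => Empty
  | .and A B => Occ A ⊕ Occ B

/-- The matching relation on `source ⊕ target` induced by a relabelling function
from target occurrences to source occurrences. -/
def relabel {α β : Type} (φ : β → α) : α ⊕ β → α ⊕ β → Prop :=
  fun u v => (∃ o, u = Sum.inl (φ o) ∧ v = Sum.inr o) ∨
             (∃ o, u = Sum.inr o ∧ v = Sum.inl (φ o))

/-- The matching relation induced by a relabelling function from source occurrences
to target occurrences. -/
def corelabel {α β : Type} (ψ : α → β) : α ⊕ β → α ⊕ β → Prop :=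
  fun u v => (∃ o, u = Sum.inl o ∧ v = Sum.inr (ψ o)) ∨
             (∃ o, u = Sum.inr (ψ o) ∧ v = Sum.inl o)

/-- Horizontal (side-by-side) composition of Brauerian diagrams. -/
def tensRel {α β γ δ : Type}
    (p : α ⊕ β → α ⊕ β → Prop) (q : γ ⊕ δ → γ ⊕ δ → Prop) :
    (α ⊕ γ) ⊕ (β ⊕ δ) → (α ⊕ γ) ⊕ (β ⊕ δ) → Prop :=
  fun u v =>
    (∃ x y, p x y ∧ u = Sum.map Sum.inl Sum.inl x ∧ v = Sum.map Sum.inl Sum.inl y) ∨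
    (∃ x y, q x y ∧ u = Sum.map Sum.inr Sum.inr x ∧ v = Sum.map Sum.inr Sum.inr y)

/-- Vertical composition of Brauerian diagrams: two endpoints are matched in the
composite when they are joined by a path of edges through the middle points. -/
def compRel {α β γ : Type}
    (p : α ⊕ β → α ⊕ β → Prop) (q : β ⊕ γ → β ⊕ γ → Prop) :
    α ⊕ γ → α ⊕ γ → Prop :=
  fun u v => u ≠ v ∧
    Relation.ReflTransGen
      (fun s t : α ⊕ β ⊕ γ =>
        (∃ x y, p x y ∧ s = Sum.map (fun a => a) Sum.inl x ∧
                        t = Sum.map (fun a => a) Sum.inl y) ∨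
        (∃ x y, q x y ∧ s = Sum.inr x ∧ t = Sum.inr y))
      (Sum.map (fun a => a) Sum.inr u) (Sum.map (fun a => a) Sum.inr v)

/-- Arrow terms. -/
inductive Ar (V : Type) : Fm V → Fm V → Type
  | id (A : Fm V) : Ar V A A
  | comp {A B C : Fm V} : Ar V B C → Ar V A B → Ar V A C
  | tens {A B C D : Fm V} : Ar V A B → Ar V C D → Ar V (.and A C) (.and B D)
  | bto (A B C : Fm V) : Ar V (.and A (.and B C)) (.and (.and A B) C)
  | bfrom (A B C : Fm V) : Ar V (.and (.and A B) C) (.and A (.and B C))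
  | dto (A : Fm V) : Ar V (.and A .top) A
  | dfrom (A : Fm V) : Ar V A (.and A .top)
  | sto (A : Fm V) : Ar V (.and .top A) A
  | sfrom (A : Fm V) : Ar V A (.and .top A)
  | r (x : V) : Ar V .top (.rel x x)
  | t (x y z : V) : Ar V (.and (.rel x y) (.rel y z)) (.rel x z)

/-- The Brauerian diagram (matching relation on occurrences of variables in
source and target) associated with an arrow term: the image under the functor G. -/
def GRel {V : Type} : ∀ {A B : Fm V}, Ar V A B → (Occ A ⊕ Occ B → Occ A ⊕ Occ B → Prop)
  | _, _, .id _ => relabel (fun o => o)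
  | _, _, .comp g f => compRel (GRel f) (GRel g)
  | _, _, .tens f g => tensRel (GRel f) (GRel g)
  | _, _, .bto _ _ _ => relabel (fun o =>
      match o with
      | Sum.inl (Sum.inl a) => Sum.inl a
      | Sum.inl (Sum.inr b) => Sum.inr (Sum.inl b)
      | Sum.inr c => Sum.inr (Sum.inr c))
  | _, _, .bfrom _ _ _ => relabel (fun o =>
      match o with
      | Sum.inl a => Sum.inl (Sum.inl a)
      | Sum.inr (Sum.inl b) => Sum.inl (Sum.inr b)
      | Sum.inr (Sum.inr c) => Sum.inr c)
  | _, _, .dto _ => relabel Sum.inl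
  | _, _, .dfrom _ => corelabel Sum.inl
  | _, _, .sto _ => relabel Sum.inr
  | _, _, .sfrom _ => corelabel Sum.inr
  | _, _, .r _ => fun u v =>
      (u = Sum.inr false ∧ v = Sum.inr true) ∨ (u = Sum.inr true ∧ v = Sum.inr false)
  | _, _, .t _ _ _ => fun u v =>
      (u = Sum.inl (Sum.inl false) ∧ v = Sum.inr false) ∨
      (u = Sum.inr false ∧ v = Sum.inl (Sum.inl false)) ∨
      (u = Sum.inl (Sum.inr true) ∧ v = Sum.inr true) ∨
      (u = Sum.inr true ∧ v = Sum.inl (Sum.inr true)) ∨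
      (u = Sum.inl (Sum.inl true) ∧ v = Sum.inl (Sum.inr false)) ∨
      (u = Sum.inl (Sum.inr false) ∧ v = Sum.inl (Sum.inl true))

/-- Equality of arrow terms: the smallest congruence generated by the defining
equations of the category. -/
inductive Eqv {V : Type} : ∀ {A B : Fm V}, Ar V A B → Ar V A B → Prop
  | refl {A B : Fm V} (f : Ar V A B) : Eqv f f
  | symm {A B : Fm V} {f g : Ar V A B} : Eqv f g → Eqv g f
  | trans {A B : Fm V} {f g h : Ar V A B} : Eqv f g → Eqv g h → Eqv f h
  | congr_comp {A B C : Fm V} {g g' : Ar V B C} {f f' : Ar V A B} :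
      Eqv g g' → Eqv f f' → Eqv (g.comp f) (g'.comp f')
  | congr_tens {A B C D : Fm V} {f f' : Ar V A B} {g g' : Ar V C D} :
      Eqv f f' → Eqv g g' → Eqv (f.tens g) (f'.tens g')
  | id_comp {A B : Fm V} (f : Ar V A B) : Eqv ((Ar.id B).comp f) f
  | comp_id {A B : Fm V} (f : Ar V A B) : Eqv (f.comp (Ar.id A)) f
  | comp_assoc {A B C D : Fm V} (h : Ar V C D) (g : Ar V B C) (f : Ar V A B) :
      Eqv ((h.comp g).comp f) (h.comp (g.comp f))
  | tens_id (A B : Fm V) : Eqv ((Ar.id A).tens (Ar.id B)) (Ar.id (.and A B))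
  | tens_comp {A1 B1 C1 A2 B2 C2 : Fm V} (g1 : Ar V B1 C1) (f1 : Ar V A1 B1)
      (g2 : Ar V B2 C2) (f2 : Ar V A2 B2) :
      Eqv ((g1.comp f1).tens (g2.comp f2)) ((g1.tens g2).comp (f1.tens f2))
  | nat_b {A B C D E F : Fm V} (f : Ar V A D) (g : Ar V B E) (h : Ar V C F) :
      Eqv (((f.tens g).tens h).comp (Ar.bto A B C)) ((Ar.bto D E F).comp (f.tens (g.tens h)))
  | nat_d {A D : Fm V} (f : Ar V A D) :
      Eqv (f.comp (Ar.dto A)) ((Ar.dto D).comp (f.tens (Ar.id .top)))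
  | nat_s {A D : Fm V} (f : Ar V A D) :
      Eqv (f.comp (Ar.sto A)) ((Ar.sto D).comp ((Ar.id .top).tens f))
  | bb1 (A B C : Fm V) : Eqv ((Ar.bfrom A B C).comp (Ar.bto A B C)) (Ar.id (.and A (.and B C)))
  | bb2 (A B C : Fm V) : Eqv ((Ar.bto A B C).comp (Ar.bfrom A B C)) (Ar.id (.and (.and A B) C))
  | dd1 (A : Fm V) : Eqv ((Ar.dfrom A).comp (Ar.dto A)) (Ar.id (.and A .top))
  | dd2 (A : Fm V) : Eqv ((Ar.dto A).comp (Ar.dfrom A)) (Ar.id A)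
  | ss1 (A : Fm V) : Eqv ((Ar.sfrom A).comp (Ar.sto A)) (Ar.id (.and .top A))
  | ss2 (A : Fm V) : Eqv ((Ar.sto A).comp (Ar.sfrom A)) (Ar.id A)
  | pent (A B C D : Fm V) :
      Eqv ((Ar.bto (.and A B) C D).comp (Ar.bto A B (.and C D)))
        (((Ar.bto A B C).tens (Ar.id D)).comp
          ((Ar.bto A (.and B C) D).comp ((Ar.id A).tens (Ar.bto B C D))))
  | bds (A C : Fm V) :
      Eqv (Ar.bto A .top C) (((Ar.dfrom A).tens (Ar.id C)).comp ((Ar.id A).tens (Ar.sto C)))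
  | rtd (x y : V) :
      Eqv ((Ar.t x y y).comp ((Ar.id (.rel x y)).tens (Ar.r y))) (Ar.dto (.rel x y))
  | rts (x y : V) :
      Eqv ((Ar.t y y x).comp ((Ar.r y).tens (Ar.id (.rel y x)))) (Ar.sto (.rel y x))
  | tb (x y z u : V) :
      Eqv ((Ar.t x y u).comp ((Ar.id (.rel x y)).tens (Ar.t y z u)))
        ((Ar.t x z u).comp (((Ar.t x y z).tens (Ar.id (.rel z u))).comp
          (Ar.bto (.rel x y) (.rel y z) (.rel z u))))

/-- Primitive non-identity arrow terms. -/
inductive Prim {V : Type} : ∀ {A B : Fm V}, Ar V A B → Prop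
  | bto (A B C : Fm V) : Prim (Ar.bto A B C)
  | bfrom (A B C : Fm V) : Prim (Ar.bfrom A B C)
  | dto (A : Fm V) : Prim (Ar.dto A)
  | dfrom (A : Fm V) : Prim (Ar.dfrom A)
  | sto (A : Fm V) : Prim (Ar.sto A)
  | sfrom (A : Fm V) : Prim (Ar.sfrom A)
  | r (x : V) : Prim (Ar.r x)
  | t (x y z : V) : Prim (Ar.t x y z)

/-- 1-terms: identities padded by identities. -/
inductive OneTerm {V : Type} : ∀ {A B : Fm V}, Ar V A B → Prop
  | id (A : Fm V) : OneTerm (Ar.id A)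
  | tensl (A : Fm V) {B C : Fm V} {f : Ar V B C} : OneTerm f → OneTerm ((Ar.id A).tens f)
  | tensr (A : Fm V) {B C : Fm V} {f : Ar V B C} : OneTerm f → OneTerm (f.tens (Ar.id A))

/-- Headed arrow terms: β-terms for some primitive non-identity β. -/
inductive Headed {V : Type} : ∀ {A B : Fm V}, Ar V A B → Prop
  | prim {A B : Fm V} {f : Ar V A B} : Prim f → Headed f
  | tensl (A : Fm V) {B C : Fm V} {f : Ar V B C} : Headed f → Headed ((Ar.id A).tens f)
  | tensr (A : Fm V) {B C : Fm V} {f : Ar V B C} : Headed f → Headed (f.tens (Ar.id A))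

/-- Factorized arrow terms all of whose factors are headed. -/
inductive HeadedSeq {V : Type} : ∀ {A B : Fm V}, Ar V A B → Prop
  | single {A B : Fm V} {f : Ar V A B} : Headed f → HeadedSeq f
  | comp {A B C : Fm V} {g : Ar V B C} {f : Ar V A B} :
      HeadedSeq g → HeadedSeq f → HeadedSeq (g.comp f)

/-- Developed arrow terms: f_n ∘ … ∘ f_1 with f_1 a 1-term and all other
factors headed. -/
inductive Developed {V : Type} : ∀ {A B : Fm V}, Ar V A B → Prop
  | one {A B : Fm V} {f : Ar V A B} : OneTerm f → Developed f
  | comp {A B C : Fm V} {g : Ar V B C} {f : Ar V A B} :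
      HeadedSeq g → Developed f → Developed (g.comp f)

theorem oneterm_eq {V : Type} : ∀ {A B : Fm V} {f : Ar V A B}, OneTerm f → A = B := by
  intro A B f h
  induction h with
  | id => rfl
  | tensl A _ ih => rw [ih]
  | tensr A _ ih => rw [ih]

theorem oneterm_eqv_id {V : Type} : ∀ {A B : Fm V} {f : Ar V A B}, OneTerm f →
    ∀ (g : Ar V A B), HEq g (Ar.id A) → Eqv f g := by
  intro A B f h
  induction h with
  | id A =>
      intro g hg
      rw [eq_of_heq hg]
      exact Eqv.refl _
  | tensl A hf ih =>
      rename_i B C f'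
      have e : B = C := oneterm_eq hf
      subst e
      intro g hg
      rw [eq_of_heq hg]
      exact Eqv.trans (Eqv.congr_tens (Eqv.refl _) (ih _ HEq.rfl)) (Eqv.tens_id _ _)
  | tensr A hf ih =>
      rename_i B C f'
      have e : B = C := oneterm_eq hf
      subst e
      intro g hg
      rw [eq_of_heq hg]
      exact Eqv.trans (Eqv.congr_tens (ih _ HEq.rfl) (Eqv.refl _)) (Eqv.tens_id _ _)

theorem ot_comp {V : Type} {A B C : Fm V} {g : Ar V B C} {f : Ar V A B}
    (hg : OneTerm g) (hf : Developed f) :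
    ∃ h : Ar V A C, Developed h ∧ Eqv (g.comp f) h := by
  have e : B = C := oneterm_eq hg
  subst e
  exact ⟨f, hf, Eqv.trans
    (Eqv.congr_comp (oneterm_eqv_id hg _ HEq.rfl) (Eqv.refl f)) (Eqv.id_comp f)⟩

theorem dev_comp {V : Type} {A B C : Fm V} {g : Ar V B C} {f : Ar V A B}
    (hg : Developed g) (hf : Developed f) :
    ∃ h : Ar V A C, Developed h ∧ Eqv (g.comp f) h := by
  induction hg generalizing A f with
  | one h1 => exact ot_comp h1 hf
  | comp hs _ ih =>
      obtain ⟨h, hdev, heqv⟩ := ih hf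
      exact ⟨_, Developed.comp hs hdev,
        Eqv.trans (Eqv.comp_assoc _ _ _) (Eqv.congr_comp (Eqv.refl _) heqv)⟩

theorem hs_tensr {V : Type} {A B : Fm V} {s : Ar V A B} (hs : HeadedSeq s) (D : Fm V) :
    ∃ s' : Ar V (.and A D) (.and B D), HeadedSeq s' ∧ Eqv (s.tens (Ar.id D)) s' := by
  induction hs with
  | single h => exact ⟨_, HeadedSeq.single (Headed.tensr D h), Eqv.refl _⟩
  | comp _ _ ih1 ih2 =>
      obtain ⟨s1, hs1, he1⟩ := ih1
      obtain ⟨s2, hs2, he2⟩ := ih2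
      refine ⟨s1.comp s2, HeadedSeq.comp hs1 hs2, ?_⟩
      exact Eqv.trans (Eqv.congr_tens (Eqv.refl _) (Eqv.symm (Eqv.id_comp _)))
        (Eqv.trans (Eqv.tens_comp _ _ _ _) (Eqv.congr_comp he1 he2))

theorem hs_tensl {V : Type} {A B : Fm V} {s : Ar V A B} (hs : HeadedSeq s) (D : Fm V) :
    ∃ s' : Ar V (.and D A) (.and D B), HeadedSeq s' ∧ Eqv ((Ar.id D).tens s) s' := by
  induction hs with
  | single h => exact ⟨_, HeadedSeq.single (Headed.tensl D h), Eqv.refl _⟩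
  | comp _ _ ih1 ih2 =>
      obtain ⟨s1, hs1, he1⟩ := ih1
      obtain ⟨s2, hs2, he2⟩ := ih2
      refine ⟨s1.comp s2, HeadedSeq.comp hs1 hs2, ?_⟩
      exact Eqv.trans (Eqv.congr_tens (Eqv.symm (Eqv.id_comp _)) (Eqv.refl _))
        (Eqv.trans (Eqv.tens_comp _ _ _ _) (Eqv.congr_comp he1 he2))

theorem dev_tensr {V : Type} {A B : Fm V} {f : Ar V A B} (hf : Developed f) (D : Fm V) :
    ∃ h : Ar V (.and A D) (.and B D), Developed h ∧ Eqv (f.tens (Ar.id D)) h := by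
  induction hf with
  | one h1 => exact ⟨_, Developed.one (OneTerm.tensr D h1), Eqv.refl _⟩
  | comp hs _ ih =>
      obtain ⟨s', hs', he'⟩ := hs_tensr hs D
      obtain ⟨h, hdev, heqv⟩ := ih
      refine ⟨s'.comp h, Developed.comp hs' hdev, ?_⟩
      exact Eqv.trans (Eqv.congr_tens (Eqv.refl _) (Eqv.symm (Eqv.id_comp _)))
        (Eqv.trans (Eqv.tens_comp _ _ _ _) (Eqv.congr_comp he' heqv))

theorem dev_tensl {V : Type} {A B : Fm V} {f : Ar V A B} (hf : Developed f) (D : Fm V) :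
    ∃ h : Ar V (.and D A) (.and D B), Developed h ∧ Eqv ((Ar.id D).tens f) h := by
  induction hf with
  | one h1 => exact ⟨_, Developed.one (OneTerm.tensl D h1), Eqv.refl _⟩
  | comp hs _ ih =>
      obtain ⟨s', hs', he'⟩ := hs_tensl hs D
      obtain ⟨h, hdev, heqv⟩ := ih
      refine ⟨s'.comp h, Developed.comp hs' hdev, ?_⟩
      exact Eqv.trans (Eqv.congr_tens (Eqv.symm (Eqv.id_comp _)) (Eqv.refl _))
        (Eqv.trans (Eqv.tens_comp _ _ _ _) (Eqv.congr_comp he' heqv))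

theorem prim_dev {V : Type} {A B : Fm V} {f : Ar V A B} (h : Prim f) :
    ∃ f' : Ar V A B, Developed f' ∧ Eqv f f' :=
  ⟨f.comp (Ar.id A),
    Developed.comp (HeadedSeq.single (Headed.prim h)) (Developed.one (OneTerm.id A)),
    Eqv.symm (Eqv.comp_id f)⟩

/-- Development Lemma. -/
theorem stmt2 {V : Type} {A B : Fm V} (f : Ar V A B) :
    ∃ f' : Ar V A B, Developed f' ∧ Eqv f f' := by
  induction f with
  | id A => exact ⟨_, Developed.one (OneTerm.id A), Eqv.refl _⟩
  | comp g f ihg ihf =>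
      obtain ⟨g', hg', heg⟩ := ihg
      obtain ⟨f', hf', hef⟩ := ihf
      obtain ⟨h, hdev, heqv⟩ := dev_comp hg' hf'
      exact ⟨h, hdev, Eqv.trans (Eqv.congr_comp heg hef) heqv⟩
  | tens f g ihf ihg =>
      obtain ⟨f', hf', hef⟩ := ihf
      obtain ⟨g', hg', heg⟩ := ihg
      obtain ⟨h1, hd1, he1⟩ := dev_tensr hf' _
      obtain ⟨h2, hd2, he2⟩ := dev_tensl hg' _
      obtain ⟨h, hdev, heqv⟩ := dev_comp hd1 hd2
      refine ⟨h, hdev, Eqv.trans (Eqv.congr_tens hef heg) ?_⟩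
      have split : Eqv (f'.tens g') ((f'.tens (Ar.id _)).comp ((Ar.id _).tens g')) :=
        Eqv.trans (Eqv.congr_tens (Eqv.symm (Eqv.comp_id f')) (Eqv.symm (Eqv.id_comp g')))
          (Eqv.tens_comp _ _ _ _)
      exact Eqv.trans split (Eqv.trans (Eqv.congr_comp he1 he2) heqv)
  | bto A B C => exact prim_dev (Prim.bto A B C)
  | bfrom A B C => exact prim_dev (Prim.bfrom A B C)
  | dto A => exact prim_dev (Prim.dto A)
  | dfrom A => exact prim_dev (Prim.dfrom A)
  | sto A => exact prim_dev (Prim.sto A)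
  | sfrom A => exact prim_dev (Prim.sfrom A)
  | r x => exact prim_dev (Prim.r x)
  | t x y z => exact prim_dev (Prim.t x y z)

end DP
end

section
/- Fix distinct variables y and z, and let γ^z_A = (r_z∧1_A)∘σ←_A : A ⊢ z≤z∧A and φ^z_{y≤u∧A} = (t_{y,z,u}∧1_A)∘b→_{y≤z,z≤u,A} : y≤z∧(z≤u∧A) ⊢ y≤u∧A. Then the following equations hold in M≤: (i) r_z = δ→_{z≤z}∘γ^z_⊤; (ii) t_{y,z,u} = δ→_{y≤u}∘φ^z_{y≤u∧⊤}∘(1_{y≤z}∧δ←_{z≤u}); and (iii) for every variable v distinct from y, t_{v,z,u} = δ→_{v≤u}∘G^vφ^z_{y≤u∧⊤}∘(1_{v≤z}∧δ←_{z≤u}), where G^v denotes the substitution operation uniformly replacing y by v in an arrow term. -/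
/-! Formalization of categories of proofs for linear equality (Dosen-Petric),
with the generality functor G into the category Br of Brauerian diagrams,
represented here by the matching relation on occurrences of variables. -/

namespace DP

/-- Substitution of variables for variables in a formula. -/
def subF {V : Type} (σ : V → V) : Fm V → Fm V
  | .rel x y => .rel (σ x) (σ y)
  | .top => .top
  | .and A B => .and (subF σ A) (subF σ B)

/-- Substitution of variables for variables in an arrow term. -/
def subA {V : Type} (σ : V → V) : ∀ {A B : Fm V}, Ar V A B → Ar V (subF σ A) (subF σ B)
  | _, _, .id A => Ar.id (subF σ A)
  | _, _, .comp g f => (subA σ g).comp (subA σ f)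
  | _, _, .tens f g => (subA σ f).tens (subA σ g)
  | _, _, .bto A B C => Ar.bto (subF σ A) (subF σ B) (subF σ C)
  | _, _, .bfrom A B C => Ar.bfrom (subF σ A) (subF σ B) (subF σ C)
  | _, _, .dto A => Ar.dto (subF σ A)
  | _, _, .dfrom A => Ar.dfrom (subF σ A)
  | _, _, .sto A => Ar.sto (subF σ A)
  | _, _, .sfrom A => Ar.sfrom (subF σ A)
  | _, _, .r x => Ar.r (σ x)
  | _, _, .t x y z => Ar.t (σ x) (σ y) (σ z)

/-- The unit component γ^z_A = (r_z ∧ 1_A) ∘ σ←_A : A ⊢ z R z ∧ A. -/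
def gammaArr {V : Type} (z : V) (A : Fm V) : Ar V A (.and (.rel z z) A) :=
  ((Ar.r z).tens (Ar.id A)).comp (Ar.sfrom A)

/-- The counit component φ^z_{y R u ∧ A} = (t_{y,z,u} ∧ 1_A) ∘ b→ :
y R z ∧ (z R u ∧ A) ⊢ y R u ∧ A. -/
def phiArr {V : Type} (y z u : V) (A : Fm V) :
    Ar V (.and (.rel y z) (.and (.rel z u) A)) (.and (.rel y u) A) :=
  ((Ar.t y z u).tens (Ar.id A)).comp (Ar.bto (.rel y z) (.rel z u) A)

section Aux

variable {V : Type}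

local infix:40 " ~~ " => Eqv

/-- whisker left -/
lemma Eqv.wl {A B C : Fm V} (f : Ar V B C) {g g' : Ar V A B} (h : Eqv g g') :
    Eqv (f.comp g) (f.comp g') := Eqv.congr_comp (Eqv.refl f) h

/-- whisker right -/
lemma Eqv.wr {A B C : Fm V} {g g' : Ar V B C} (h : Eqv g g') (f : Ar V A B) :
    Eqv (g.comp f) (g'.comp f) := Eqv.congr_comp h (Eqv.refl f)

lemma Eqv.tensl {A B C D : Fm V} (f : Ar V A B) {g g' : Ar V C D} (h : Eqv g g') :
    Eqv (f.tens g) (f.tens g') := Eqv.congr_tens (Eqv.refl f) h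

lemma Eqv.tensr {A B C D : Fm V} {f f' : Ar V A B} (h : Eqv f f') (g : Ar V C D) :
    Eqv (f.tens g) (f'.tens g) := Eqv.congr_tens h (Eqv.refl g)

instance {A B : Fm V} : Trans (Eqv (A := A) (B := B)) (Eqv (A := A) (B := B))
    (Eqv (A := A) (B := B)) := ⟨Eqv.trans⟩

/-- sliding a map past another in a tensor -/
lemma slide {A B C D : Fm V} (f : Ar V A B) (k : Ar V C D) :
    Eqv (((Ar.id B).tens k).comp (f.tens (Ar.id C))) ((f.tens (Ar.id D)).comp ((Ar.id A).tens k)) :=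
  calc ((Ar.id B).tens k).comp (f.tens (Ar.id C))
      ~~ ((Ar.id B).comp f).tens (k.comp (Ar.id C)) := (Eqv.tens_comp _ _ _ _).symm
    _ ~~ f.tens k :=
        Eqv.congr_tens (Eqv.id_comp f) (Eqv.comp_id k)
    _ ~~ (f.comp (Ar.id A)).tens ((Ar.id D).comp k) :=
        (Eqv.congr_tens (Eqv.comp_id f) (Eqv.id_comp k)).symm
    _ ~~ (f.tens (Ar.id D)).comp ((Ar.id A).tens k) := Eqv.tens_comp _ _ _ _

/-- Part (i), general form. -/
lemma part_i (z : V) :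
    Eqv (Ar.r z) ((Ar.dto (Fm.rel z z)).comp (gammaArr z Fm.top)) := by
  refine Eqv.symm ?_
  calc (Ar.dto (Fm.rel z z)).comp (gammaArr z Fm.top)
      ~~ ((Ar.dto (Fm.rel z z)).comp ((Ar.r z).tens (Ar.id Fm.top))).comp (Ar.sfrom Fm.top) :=
        (Eqv.comp_assoc _ _ _).symm
    _ ~~ (((Ar.t z z z).comp ((Ar.id (Fm.rel z z)).tens (Ar.r z))).comp
          ((Ar.r z).tens (Ar.id Fm.top))).comp (Ar.sfrom Fm.top) :=
        Eqv.wr (Eqv.wr (Eqv.rtd z z).symm _) _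
    _ ~~ ((Ar.t z z z).comp (((Ar.id (Fm.rel z z)).tens (Ar.r z)).comp
          ((Ar.r z).tens (Ar.id Fm.top)))).comp (Ar.sfrom Fm.top) :=
        Eqv.wr (Eqv.comp_assoc _ _ _) _
    _ ~~ ((Ar.t z z z).comp (((Ar.r z).tens (Ar.id (Fm.rel z z))).comp
          ((Ar.id Fm.top).tens (Ar.r z)))).comp (Ar.sfrom Fm.top) :=
        Eqv.wr (Eqv.wl _ (slide (Ar.r z) (Ar.r z))) _
    _ ~~ (((Ar.t z z z).comp ((Ar.r z).tens (Ar.id (Fm.rel z z)))).comp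
          ((Ar.id Fm.top).tens (Ar.r z))).comp (Ar.sfrom Fm.top) :=
        Eqv.wr (Eqv.comp_assoc _ _ _).symm _
    _ ~~ ((Ar.sto (Fm.rel z z)).comp ((Ar.id Fm.top).tens (Ar.r z))).comp (Ar.sfrom Fm.top) :=
        Eqv.wr (Eqv.wr (Eqv.rts z z) _) _
    _ ~~ ((Ar.r z).comp (Ar.sto Fm.top)).comp (Ar.sfrom Fm.top) :=
        Eqv.wr (Eqv.nat_s (Ar.r z)).symm _
    _ ~~ (Ar.r z).comp ((Ar.sto Fm.top).comp (Ar.sfrom Fm.top)) := Eqv.comp_assoc _ _ _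
    _ ~~ (Ar.r z).comp (Ar.id Fm.top) := Eqv.wl _ (Eqv.ss2 _)
    _ ~~ Ar.r z := Eqv.comp_id _

/-- Part (ii), general form: no distinctness hypotheses are needed. -/
lemma part_ii (y z u : V) :
    Eqv (Ar.t y z u)
      ((Ar.dto (Fm.rel y u)).comp ((phiArr y z u Fm.top).comp
        ((Ar.id (Fm.rel y z)).tens (Ar.dfrom (Fm.rel z u))))) := by
  refine Eqv.symm ?_
  set A := Fm.rel y z with hA
  set B := Fm.rel z u with hB
  set C := Fm.rel y u with hC
  set U := Fm.rel u u with hU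
  calc (Ar.dto C).comp ((phiArr y z u Fm.top).comp ((Ar.id A).tens (Ar.dfrom B)))
      ~~ (((Ar.dto C).comp ((Ar.t y z u).tens (Ar.id Fm.top))).comp
          (Ar.bto A B Fm.top)).comp ((Ar.id A).tens (Ar.dfrom B)) := by
        refine Eqv.trans (Eqv.comp_assoc _ _ _).symm (Eqv.wr ?_ _)
        exact (Eqv.comp_assoc _ _ _).symm
    _ ~~ ((((Ar.t y u u).comp ((Ar.id C).tens (Ar.r u))).comp
          ((Ar.t y z u).tens (Ar.id Fm.top))).comp
          (Ar.bto A B Fm.top)).comp ((Ar.id A).tens (Ar.dfrom B)) :=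
        Eqv.wr (Eqv.wr (Eqv.wr (Eqv.rtd y u).symm _) _) _
    _ ~~ (((Ar.t y u u).comp (((Ar.id C).tens (Ar.r u)).comp
          ((Ar.t y z u).tens (Ar.id Fm.top)))).comp
          (Ar.bto A B Fm.top)).comp ((Ar.id A).tens (Ar.dfrom B)) :=
        Eqv.wr (Eqv.wr (Eqv.comp_assoc _ _ _) _) _
    _ ~~ (((Ar.t y u u).comp (((Ar.t y z u).tens (Ar.id U)).comp
          ((Ar.id (Fm.and A B)).tens (Ar.r u)))).comp
          (Ar.bto A B Fm.top)).comp ((Ar.id A).tens (Ar.dfrom B)) :=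
        Eqv.wr (Eqv.wr (Eqv.wl _ (slide (Ar.t y z u) (Ar.r u))) _) _
    _ ~~ (((Ar.t y u u).comp ((Ar.t y z u).tens (Ar.id U))).comp
          (((Ar.id (Fm.and A B)).tens (Ar.r u)).comp
          (Ar.bto A B Fm.top))).comp ((Ar.id A).tens (Ar.dfrom B)) := by
        refine Eqv.wr ?_ _
        exact Eqv.trans (Eqv.wr (Eqv.comp_assoc _ _ _).symm _) (Eqv.comp_assoc _ _ _)
    _ ~~ (((Ar.t y u u).comp ((Ar.t y z u).tens (Ar.id U))).comp
          ((Ar.bto A B U).comp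
          ((Ar.id A).tens ((Ar.id B).tens (Ar.r u))))).comp ((Ar.id A).tens (Ar.dfrom B)) := by
        refine Eqv.wr (Eqv.wl _ ?_) _
        calc ((Ar.id (Fm.and A B)).tens (Ar.r u)).comp (Ar.bto A B Fm.top)
            ~~ (((Ar.id A).tens (Ar.id B)).tens (Ar.r u)).comp (Ar.bto A B Fm.top) :=
              Eqv.wr (Eqv.tensr (Eqv.tens_id A B).symm _) _
          _ ~~ (Ar.bto A B U).comp ((Ar.id A).tens ((Ar.id B).tens (Ar.r u))) :=
              Eqv.nat_b _ _ _
    _ ~~ ((Ar.t y u u).comp (((Ar.t y z u).tens (Ar.id U)).comp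
          (Ar.bto A B U))).comp
          (((Ar.id A).tens ((Ar.id B).tens (Ar.r u))).comp ((Ar.id A).tens (Ar.dfrom B))) := by
        refine Eqv.trans (Eqv.comp_assoc _ _ _) ?_
        refine Eqv.trans (Eqv.wl _ (Eqv.comp_assoc _ _ _)) ?_
        refine Eqv.trans (Eqv.comp_assoc _ _ _).symm ?_
        exact Eqv.wr (Eqv.comp_assoc _ _ _) _
    _ ~~ ((Ar.t y z u).comp ((Ar.id A).tens (Ar.t z u u))).comp
          (((Ar.id A).tens ((Ar.id B).tens (Ar.r u))).comp ((Ar.id A).tens (Ar.dfrom B))) :=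
        Eqv.wr (Eqv.tb y z u u).symm _
    _ ~~ (Ar.t y z u).comp (((Ar.id A).tens (Ar.t z u u)).comp
          ((((Ar.id A).tens ((Ar.id B).tens (Ar.r u))).comp ((Ar.id A).tens (Ar.dfrom B))))) :=
        Eqv.comp_assoc _ _ _
    _ ~~ (Ar.t y z u).comp ((Ar.id A).tens
          ((Ar.t z u u).comp (((Ar.id B).tens (Ar.r u)).comp (Ar.dfrom B)))) := by
        refine Eqv.wl _ ?_
        calc ((Ar.id A).tens (Ar.t z u u)).comp
              ((((Ar.id A).tens ((Ar.id B).tens (Ar.r u))).comp ((Ar.id A).tens (Ar.dfrom B))))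
            ~~ ((Ar.id A).tens (Ar.t z u u)).comp
              (((Ar.id A).comp (Ar.id A)).tens (((Ar.id B).tens (Ar.r u)).comp (Ar.dfrom B))) :=
              Eqv.wl _ (Eqv.tens_comp _ _ _ _).symm
          _ ~~ ((Ar.id A).comp ((Ar.id A).comp (Ar.id A))).tens
              ((Ar.t z u u).comp (((Ar.id B).tens (Ar.r u)).comp (Ar.dfrom B))) :=
              (Eqv.tens_comp _ _ _ _).symm
          _ ~~ (Ar.id A).tens
              ((Ar.t z u u).comp (((Ar.id B).tens (Ar.r u)).comp (Ar.dfrom B))) :=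
              Eqv.tensr (Eqv.trans (Eqv.id_comp _) (Eqv.id_comp _)) _
    _ ~~ (Ar.t y z u).comp ((Ar.id A).tens (Ar.id B)) := by
        refine Eqv.wl _ (Eqv.tensl _ ?_)
        calc (Ar.t z u u).comp (((Ar.id B).tens (Ar.r u)).comp (Ar.dfrom B))
            ~~ ((Ar.t z u u).comp ((Ar.id B).tens (Ar.r u))).comp (Ar.dfrom B) :=
              (Eqv.comp_assoc _ _ _).symm
          _ ~~ (Ar.dto B).comp (Ar.dfrom B) := Eqv.wr (Eqv.rtd z u) _
          _ ~~ Ar.id B := Eqv.dd2 _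
    _ ~~ (Ar.t y z u).comp (Ar.id (Fm.and A B)) := Eqv.wl _ (Eqv.tens_id A B)
    _ ~~ Ar.t y z u := Eqv.comp_id _

end Aux

/-- r and t are definable from the unit and counit of the
adjunction. -/
theorem stmt17 {V : Type} [DecidableEq V] (y z : V) (hyz : y ≠ z) :
    -- (i) r_z = δ→_{z R z} ∘ γ^z_⊤
    Eqv (Ar.r z) ((Ar.dto (Fm.rel z z)).comp (gammaArr z Fm.top)) ∧
    -- (ii) t_{y,z,u} = δ→_{y R u} ∘ φ^z_{y R u ∧ ⊤} ∘ (1_{y R z} ∧ δ←_{z R u})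
    (∀ u : V,
      Eqv (Ar.t y z u)
        ((Ar.dto (Fm.rel y u)).comp ((phiArr y z u Fm.top).comp
          ((Ar.id (Fm.rel y z)).tens (Ar.dfrom (Fm.rel z u)))))) ∧
    -- (iii) t_{v,z,u} = δ→_{v R u} ∘ G^v φ^z_{y R u ∧ ⊤} ∘ (1_{v R z} ∧ δ←_{z R u})
    (∀ v u : V, v ≠ y → u ≠ y →
      ∃ p : Ar V (Fm.and (.rel v z) (Fm.and (.rel z u) Fm.top)) (Fm.and (.rel v u) Fm.top),
        HEq p (subA (fun w => if w = y then v else w) (phiArr y z u Fm.top)) ∧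
        Eqv (Ar.t v z u)
          ((Ar.dto (Fm.rel v u)).comp (p.comp
            ((Ar.id (Fm.rel v z)).tens (Ar.dfrom (Fm.rel z u)))))) := by
  refine ⟨part_i z, fun u => part_ii y z u, fun v u hv hu => ?_⟩
  refine ⟨phiArr v z u Fm.top, ?_, part_ii v z u⟩
  set σ : V → V := fun w => if w = y then v else w with hσ
  have key : ∀ a b c : V, σ y = a → σ z = b → σ u = c →
      HEq (phiArr a b c (Fm.top : Fm V)) (subA σ (phiArr y z u Fm.top)) := by
    rintro a b c rfl rfl rfl
    exact HEq.rfl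
  exact key v z u (if_pos rfl) (if_neg (Ne.symm hyz)) (if_neg hu)

end DP
end
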